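/- arXiv:1810.05130 — 3 statements merged into one kernel-verified Lean document; each statement's English description precedes it below -/
import Mathlib

section
/- For s > 0 let p_s : ℕ → ℝ be the Poisson probability mass function p_s(x) = e^{−s}·s^x/x!. There exist constants c > 0 and C > 0 such that for every s ∈ (0, ∞) and every real r with r ≥ √s and s + r ∈ ℕ, writing N = s + r, one has c·max(s/r, 1) ≤ ( Σ_{x ≥ N} p_s(x) ) / p_s(N) ≤ C·max(s/r, 1). -/
/-!
Dividing by `P(X = N)`, the ratio becomes `∑ₖ sᵏ N! / (N + k)!`. Since `(N + k)! ≥ N! Nᵏ`, the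
terms are dominated by the geometric series of ratio `s / N`, whose sum is `N / r = s / r + 1`.
Conversely `(N + k)! ≤ N! (N + k)ᵏ` and `(N + k) / s ≤ exp ((r + k) / s)` bound the `k`-th
term below by `exp (-k (r + k) / s)`, which is at least `e⁻²` as long as `k ≤ s / r`, because
`r² ≥ s` then also gives `k² ≤ s`; there are `⌊s / r⌋ + 1 ≥ max (s / r) 1` such terms.
-/

open Real Nat Finset

theorem Nat.factorial_add_le_factorial_mul_pow (N k : ℕ) : (N + k)! ≤ N ! * (N + k) ^ k := by
  rw [← factorial_mul_ascFactorial]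
  exact Nat.mul_le_mul_left _ (ascFactorial_le_pow_add N k)

theorem tsum_ite_le_eq_tsum_nat_add {M : Type*} [AddCommMonoid M] [TopologicalSpace M]
    [ContinuousAdd M] [T2Space M] {f : ℕ → M} (N : ℕ) (hf : Summable fun k ↦ f (k + N)) :
    ∑' x, (if N ≤ x then f x else 0) = ∑' k, f (k + N) := by
  have hf' : Summable fun k ↦ if N ≤ k + N then f (k + N) else 0 := by
    simpa only [Nat.le_add_left, if_true] using hf
  rw [← Summable.sum_add_tsum_nat_add' (f := fun x ↦ if N ≤ x then f x else 0) hf',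
    sum_eq_zero fun i hi ↦ if_neg (by simpa using hi)]
  simp

noncomputable def poissonRatio (s : ℝ) (N k : ℕ) : ℝ := s ^ k * N ! / (N + k)!

theorem tsum_poisson_tail_div_eq_tsum_poissonRatio {s : ℝ} (hs : s ≠ 0) (N : ℕ) :
    (∑' x : ℕ, if N ≤ x then exp (-s) * s ^ x / x ! else 0) / (exp (-s) * s ^ N / N !) =
      ∑' k, poissonRatio s N k := by
  have hterm (k : ℕ) : exp (-s) * s ^ (k + N) / (k + N)! =
      exp (-s) * s ^ N / N ! * poissonRatio s N k := by
    rw [poissonRatio, add_comm k N, pow_add]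
    field_simp
  have hsum : Summable fun k ↦ exp (-s) * s ^ (k + N) / (k + N)! := by
    simpa only [mul_div_assoc] using
      ((summable_nat_add_iff N).2 (Real.summable_pow_div_factorial s)).mul_left (exp (-s))
  rw [tsum_ite_le_eq_tsum_nat_add (f := fun x ↦ exp (-s) * s ^ x / x !) N hsum]
  simp only [hterm, tsum_mul_left]
  exact mul_div_cancel_left₀ _ (by positivity)

theorem poissonRatio_le_div_pow {s : ℝ} (hs : 0 ≤ s) {N : ℕ} (hN : 0 < N) (k : ℕ) :
    poissonRatio s N k ≤ (s / N) ^ k := by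
  have hfact : (N ! * N ^ k : ℝ) ≤ (N + k)! := by
    exact_mod_cast (Nat.mul_le_mul_left _ (Nat.pow_le_pow_left N.le_succ k)).trans
      factorial_mul_pow_le_factorial
  rw [poissonRatio, div_pow, div_le_div_iff₀ (by positivity) (by positivity), mul_assoc]
  exact mul_le_mul_of_nonneg_left hfact (pow_nonneg hs k)

theorem summable_poissonRatio {s : ℝ} (hs : 0 ≤ s) {N : ℕ} (hsN : s < N) :
    Summable (poissonRatio s N) :=
  (summable_geometric_of_lt_one (by positivity) ((div_lt_one (hs.trans_lt hsN)).2 hsN)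
    ).of_nonneg_of_le (fun k ↦ by unfold poissonRatio; positivity)
    (poissonRatio_le_div_pow hs (Nat.cast_pos.1 (hs.trans_lt hsN)))

theorem tsum_poissonRatio_le {s : ℝ} (hs : 0 ≤ s) {N : ℕ} (hsN : s < N) :
    ∑' k, poissonRatio s N k ≤ N / (N - s) := by
  have hN : (0 : ℝ) < N := hs.trans_lt hsN
  have hq : s / N < 1 := (div_lt_one hN).2 hsN
  calc ∑' k, poissonRatio s N k ≤ ∑' k, (s / N) ^ k :=
        (summable_poissonRatio hs hsN).tsum_le_tsum (poissonRatio_le_div_pow hs (Nat.cast_pos.1 hN))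
          (summable_geometric_of_lt_one (by positivity) hq)
    _ = N / (N - s) := by
        rw [tsum_geometric_of_lt_one (by positivity) hq]
        field_simp [(sub_pos.2 hsN).ne']

theorem exp_neg_le_poissonRatio {s : ℝ} (hs : 0 < s) (N k : ℕ) :
    exp (-(k * (N + k - s) / s)) ≤ poissonRatio s N k := by
  set x := k * (N + k - s) / s
  have hbase : ((N + k : ℕ) : ℝ) ≤ s * exp ((N + k - s) / s) := by
    calc ((N + k : ℕ) : ℝ) = s * ((N + k - s) / s + 1) := by push_cast; field_simp; ring
      _ ≤ s * exp ((N + k - s) / s) := by gcongr; exact add_one_le_exp _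
  have hpow : ((N + k : ℕ) : ℝ) ^ k ≤ s ^ k * exp x :=
    calc ((N + k : ℕ) : ℝ) ^ k ≤ (s * exp ((N + k - s) / s)) ^ k :=
          pow_le_pow_left₀ (by positivity) hbase k
      _ = s ^ k * exp x := by rw [mul_pow, ← exp_nat_mul, ← mul_div_assoc]
  have hfact : ((N + k)! : ℝ) ≤ N ! * ((N + k : ℕ) : ℝ) ^ k := by
    exact_mod_cast factorial_add_le_factorial_mul_pow N k
  rw [poissonRatio, le_div_iff₀ (by positivity)]
  calc exp (-x) * (N + k)! ≤ exp (-x) * (N ! * (s ^ k * exp x)) := by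
        gcongr; exact hfact.trans (by gcongr)
    _ = s ^ k * N ! := by rw [exp_neg]; field_simp

theorem exp_neg_two_le_poissonRatio {s : ℝ} (hs : 0 < s) {N k : ℕ} (hk₁ : k * (N - s) ≤ s)
    (hk₂ : (k : ℝ) ^ 2 ≤ s) : exp (-2) ≤ poissonRatio s N k := by
  refine le_trans (exp_le_exp.2 ?_) (exp_neg_le_poissonRatio hs N k)
  rw [neg_le_neg_iff, div_le_iff₀ hs]
  linarith

theorem exp_neg_two_mul_max_le_tsum_poissonRatio {s r : ℝ} (hs : 0 < s) (hr : 0 < r)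
    (hsr : s ≤ r ^ 2) {N : ℕ} (hN : (N : ℝ) = s + r) :
    exp (-2) * max (s / r) 1 ≤ ∑' k, poissonRatio s N k := by
  set m := ⌊s / r⌋₊
  have hterm : ∀ k ∈ range (m + 1), exp (-2) ≤ poissonRatio s N k := by
    intro k hk
    have hkm : (k : ℝ) ≤ s / r :=
      (Nat.cast_le.2 (Nat.lt_succ_iff.1 (mem_range.1 hk))).trans (Nat.floor_le (by positivity))
    have hkr : k * r ≤ s := (le_div_iff₀ hr).1 hkm
    refine exp_neg_two_le_poissonRatio hs (by rwa [hN, add_sub_cancel_left]) ?_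
    nlinarith
  calc exp (-2) * max (s / r) 1 ≤ exp (-2) * (m + 1) := by
        gcongr
        exact max_le (Nat.lt_floor_add_one _).le (by linarith [m.cast_nonneg (α := ℝ)])
    _ = ∑ k ∈ range (m + 1), exp (-2) := by simp [mul_comm]
    _ ≤ ∑ k ∈ range (m + 1), poissonRatio s N k := sum_le_sum hterm
    _ ≤ ∑' k, poissonRatio s N k :=
        (summable_poissonRatio hs.le (by linarith)).sum_le_tsum _
          (fun k _ ↦ by unfold poissonRatio; positivity)

/-- Two-sided bound on the Poisson tail-to-point ratio: there are constants
`c, C > 0` such that uniformly in `s > 0` and `r ≥ √s` with `s + r = N ∈ ℕ`,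
`P(X_s ≥ s + r) / P(X_s = s + r) ≍ max(s/r, 1)`. -/
theorem poisson_upper_tail_ratio_bounds : ∃ c C : ℝ, 0 < c ∧ 0 < C ∧
    ∀ (s r : ℝ), 0 < s → Real.sqrt s ≤ r → ∀ N : ℕ, (N : ℝ) = s + r →
      c * max (s/r) 1 ≤
        (∑' x : ℕ, if N ≤ x then Real.exp (-s) * s ^ x / (Nat.factorial x : ℝ) else 0) /
          (Real.exp (-s) * s ^ N / (Nat.factorial N : ℝ)) ∧
      (∑' x : ℕ, if N ≤ x then Real.exp (-s) * s ^ x / (Nat.factorial x : ℝ) else 0) /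
          (Real.exp (-s) * s ^ N / (Nat.factorial N : ℝ)) ≤
        C * max (s/r) 1 := by
  refine ⟨exp (-2), 2, exp_pos _, two_pos, fun s r hs hr N hN ↦ ?_⟩
  have hr0 : 0 < r := (sqrt_pos.2 hs).trans_le hr
  have hsr : s ≤ r ^ 2 := (sqrt_le_iff.1 hr).2
  rw [tsum_poisson_tail_div_eq_tsum_poissonRatio hs.ne']
  refine ⟨exp_neg_two_mul_max_le_tsum_poissonRatio hs hr0 hsr hN, ?_⟩
  calc ∑' k, poissonRatio s N k ≤ N / (N - s) := tsum_poissonRatio_le hs.le (by linarith)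
    _ = s / r + 1 := by rw [hN, add_sub_cancel_left]; field_simp
    _ ≤ 2 * max (s / r) 1 := by linarith [le_max_left (s / r) 1, le_max_right (s / r) 1]
end

section
/- For s > 0 let p_s : ℕ → ℝ be the Poisson probability mass function p_s(x) = e^{−s}·s^x/x!. There exist constants c > 0 and C > 0 such that for every s ∈ (0, ∞) and every real r with √s ≤ r ≤ s and s − r ∈ ℕ, writing N = s − r, one has both c·r²/s ≤ −log( Σ_{x = 0}^{N} p_s(x) ) ≤ C·r²/s, and c·(s/r) ≤ ( Σ_{x = 0}^{N} p_s(x) ) / p_s(N) ≤ C·(s/r). -/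
/-!
Read backwards from `N`, the tail is `∑ₖ p_s(N - k)` with `p_s(N - k) = p_s(N) · N⁽ᵏ⁾ / sᵏ`
(falling factorial). Since `N⁽ᵏ⁾ / sᵏ ≤ (N / s)ᵏ`, the tail is at most the geometric series
`s / r · p_s(N)`; by Bernoulli's inequality `N⁽ᵏ⁾ / sᵏ ≥ 1 - k (r + k) / s ≥ 1 / 4` for
`k ≤ s / (2r)` (here `r ≥ √s` is used), so the tail is at least `s / (8r) · p_s(N)`.
For the logarithm, the Chernoff bound at `θ = N / s` together with `log θ ≥ (θ - θ⁻¹) / 2` gives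
`-log P ≥ r² / (2s)`, while `P ≥ s / (8r) · p_s(N)` and the Stirling upper bound
`N! ≤ e √N (N / e)ᴺ` give `-log P ≤ 6 r² / s`.
-/

open Real Finset
open scoped Nat

theorem log_factorial_le_stirling (n : ℕ) : log n ! ≤ n * log n - n + log n / 2 + 1 := by
  rcases n.eq_zero_or_pos with rfl | hn
  · simp
  have hseq : log (Stirling.stirlingSeq n) ≤ 1 - log 2 / 2 := by
    obtain ⟨k, rfl⟩ := Nat.exists_eq_add_of_le' hn
    simpa [Stirling.stirlingSeq_one, log_div, log_sqrt] using
      Stirling.log_stirlingSeq'_antitone (Nat.zero_le k)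
  have hn' : (0 : ℝ) < n := by exact_mod_cast hn
  rw [Stirling.log_stirlingSeq_formula, log_mul two_ne_zero hn'.ne', log_div hn'.ne' (exp_pos 1).ne',
    log_exp] at hseq
  linarith

theorem half_sub_inv_le_log {x : ℝ} (hx0 : 0 < x) (hx1 : x ≤ 1) : (x - x⁻¹) / 2 ≤ log x := by
  rw [← sinh_log hx0]
  exact sinh_le_self_iff.2 (log_nonpos hx0.le hx1)

theorem Nat.one_sub_le_descFactorial_div_pow {s : ℝ} (hs : 0 < s) {N k : ℕ} (hk : k ≤ N) :
    1 - k * (s - N + k) / s ≤ N.descFactorial k / s ^ k := by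
  have hdesc : ((N - k : ℕ) : ℝ) ^ k ≤ N.descFactorial k := by
    exact_mod_cast (Nat.pow_le_pow_left (by omega) k).trans (N.pow_sub_le_descFactorial k)
  have hq : (0 : ℝ) ≤ ((N - k : ℕ) : ℝ) / s := by positivity
  have hbern := one_add_mul_le_pow (a := ((N - k : ℕ) : ℝ) / s - 1) (by linarith) k
  rw [add_sub_cancel, div_pow] at hbern
  calc 1 - k * (s - N + k) / s = 1 + k * (((N - k : ℕ) : ℝ) / s - 1) := by
        rw [Nat.cast_sub hk]; field_simp; ring
    _ ≤ _ := hbern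
    _ ≤ _ := by gcongr

-- `ProbabilityTheory.poissonPMFReal`, with a real rather than `ℝ≥0` mean.
noncomputable def poissonTerm (s : ℝ) (x : ℕ) : ℝ := exp (-s) * s ^ x / x !

noncomputable def poissonCDF (s : ℝ) (N : ℕ) : ℝ := ∑ x ∈ range (N + 1), poissonTerm s x

section Poisson

variable {s r : ℝ} {N : ℕ}

theorem poissonTerm_pos (hs : 0 < s) (x : ℕ) : 0 < poissonTerm s x := by
  unfold poissonTerm; positivity

theorem poissonTerm_le_poissonCDF (hs : 0 < s) (N : ℕ) : poissonTerm s N ≤ poissonCDF s N :=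
  single_le_sum (fun x _ ↦ (poissonTerm_pos hs x).le) (self_mem_range_succ N)

theorem poissonCDF_eq_sum_poissonTerm_sub (s : ℝ) (N : ℕ) :
    poissonCDF s N = ∑ k ∈ range (N + 1), poissonTerm s (N - k) := by
  rw [poissonCDF, ← sum_range_reflect]
  rfl

theorem poissonTerm_sub (hs : 0 < s) {k : ℕ} (hk : k ≤ N) :
    poissonTerm s (N - k) = poissonTerm s N * (N.descFactorial k / s ^ k) := by
  have hfact : ((N - k)! : ℝ) * N.descFactorial k = N ! := by
    exact_mod_cast Nat.factorial_mul_descFactorial hk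
  have hpow : s ^ (N - k) * s ^ k = s ^ N := by rw [← pow_add, Nat.sub_add_cancel hk]
  have hdesc : (N.descFactorial k : ℝ) ≠ 0 := by
    exact_mod_cast (Nat.descFactorial_pos.2 hk).ne'
  unfold poissonTerm
  rw [← hfact, ← hpow]
  field_simp

theorem poissonCDF_le_div_mul_poissonTerm (hs : 0 < s) (hNs : (N : ℝ) < s) :
    poissonCDF s N ≤ s / (s - N) * poissonTerm s N := by
  have hq : (N : ℝ) / s < 1 := (div_lt_one hs).2 hNs
  calc poissonCDF s N = ∑ k ∈ range (N + 1), poissonTerm s (N - k) :=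
        poissonCDF_eq_sum_poissonTerm_sub s N
    _ ≤ ∑ k ∈ range (N + 1), poissonTerm s N * (N / s) ^ k := by
        refine sum_le_sum fun k hk ↦ ?_
        rw [poissonTerm_sub hs (Nat.lt_succ_iff.1 (mem_range.1 hk)), div_pow]
        gcongr
        · exact (poissonTerm_pos hs N).le
        · exact_mod_cast N.descFactorial_le_pow k
    _ ≤ poissonTerm s N * ((N / s) ^ 0 / (1 - N / s)) := by
        rw [← mul_sum, range_eq_Ico]
        exact mul_le_mul_of_nonneg_left (geom_sum_Ico_le_of_lt_one (by positivity) hq)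
          (poissonTerm_pos hs N).le
    _ = s / (s - N) * poissonTerm s N := by
        field_simp [(sub_pos.2 hNs).ne']

theorem mul_poissonTerm_le_poissonCDF (hs : 0 < s) (hNs : (N : ℝ) ≤ s) {m : ℕ} (hm : m ≤ N) :
    (m + 1) * (1 - m * (s - N + m) / s) * poissonTerm s N ≤ poissonCDF s N := by
  have hterm : ∀ k ∈ range (m + 1),
      (1 - m * (s - N + m) / s) * poissonTerm s N ≤ poissonTerm s (N - k) := by
    intro k hk
    have hkm : k ≤ m := Nat.lt_succ_iff.1 (mem_range.1 hk)
    have hkm' : (k : ℝ) ≤ m := by exact_mod_cast hkm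
    rw [poissonTerm_sub hs (hkm.trans hm), mul_comm (poissonTerm s N)]
    gcongr
    · exact (poissonTerm_pos hs N).le
    calc 1 - m * (s - N + m) / s ≤ 1 - k * (s - N + k) / s := by
          gcongr
      _ ≤ _ := Nat.one_sub_le_descFactorial_div_pow hs (hkm.trans hm)
  calc (m + 1) * (1 - m * (s - N + m) / s) * poissonTerm s N
      = ∑ _k ∈ range (m + 1), (1 - m * (s - N + m) / s) * poissonTerm s N := by
        simp [mul_assoc]
    _ ≤ ∑ k ∈ range (m + 1), poissonTerm s (N - k) := sum_le_sum hterm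
    _ ≤ ∑ k ∈ range (N + 1), poissonTerm s (N - k) :=
        sum_le_sum_of_subset_of_nonneg (range_subset_range.2 (by omega))
          fun k _ _ ↦ (poissonTerm_pos hs _).le
    _ = poissonCDF s N := (poissonCDF_eq_sum_poissonTerm_sub s N).symm

theorem div_mul_poissonTerm_le_poissonCDF (hs : 0 < s) (hsr : √s ≤ r)
    (hN : (N : ℝ) = s - r) : s / (8 * r) * poissonTerm s N ≤ poissonCDF s N := by
  have hr : 0 < r := (sqrt_pos.2 hs).trans_le hsr
  have hp := poissonTerm_pos hs N
  have hsqrt : √s * √s = s := mul_self_sqrt hs.le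
  have hr1 : 1 ≤ r := by nlinarith [sqrt_nonneg s]
  rcases lt_or_ge (s / 2) r with hbig | hsmall
  · calc s / (8 * r) * poissonTerm s N ≤ 1 * poissonTerm s N := by
          gcongr
          rw [div_le_one (by positivity)]
          linarith
      _ ≤ poissonCDF s N := by simpa using poissonTerm_le_poissonCDF hs N
  -- The terms `p_s(N - k)`, `k ≤ m`, are all at least `p_s(N) / 4`.
  set m := ⌊s / (2 * r)⌋₊
  have hm : (m : ℝ) ≤ s / (2 * r) := Nat.floor_le (by positivity)
  have hm' : s / (2 * r) < m + 1 := Nat.lt_floor_add_one _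
  have hmr : m * r ≤ s / 2 := by
    rw [le_div_iff₀ (by positivity)] at hm; linarith
  have hmsq : (m : ℝ) * m ≤ s / 4 := by
    have : (m : ℝ) ≤ √s / 2 := hm.trans (by
      rw [div_le_div_iff₀ (by positivity) (by norm_num)]; nlinarith [sqrt_nonneg s])
    nlinarith [sqrt_nonneg s, Nat.cast_nonneg (α := ℝ) m]
  have hmN : m ≤ N := by
    have : (m : ℝ) ≤ N := by
      rw [hN]
      calc (m : ℝ) ≤ s / (2 * r) := hm
        _ ≤ s / 2 := div_le_div_of_nonneg_left hs.le (by norm_num) (by linarith)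
        _ ≤ s - r := by linarith
    exact_mod_cast this
  have hquarter : 1 / 4 ≤ 1 - m * (s - N + m) / s := by
    rw [hN, le_sub_comm, div_le_iff₀ hs]
    nlinarith
  calc s / (8 * r) * poissonTerm s N ≤ (m + 1) * (1 / 4) * poissonTerm s N := by
        gcongr
        rw [div_le_iff₀ (by positivity)]
        rw [div_lt_iff₀ (by positivity)] at hm'
        nlinarith
    _ ≤ (m + 1) * (1 - m * (s - N + m) / s) * poissonTerm s N := by gcongr
    _ ≤ poissonCDF s N := mul_poissonTerm_le_poissonCDF hs (by linarith) hmN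

theorem poissonCDF_le_exp_div_pow (hs : 0 < s) {θ : ℝ} (hθ0 : 0 < θ) (hθ1 : θ ≤ 1) :
    poissonCDF s N ≤ exp (s * (θ - 1)) / θ ^ N := by
  calc poissonCDF s N ≤ ∑ x ∈ range (N + 1), exp (-s) / θ ^ N * ((θ * s) ^ x / x !) := by
        refine sum_le_sum fun x hx ↦ ?_
        have hθx : θ ^ N ≤ θ ^ x :=
          pow_le_pow_of_le_one hθ0.le hθ1 (Nat.lt_succ_iff.1 (mem_range.1 hx))
        rw [show poissonTerm s x = exp (-s) / θ ^ x * ((θ * s) ^ x / x !) by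
          rw [poissonTerm, mul_pow]; field_simp]
        gcongr
    _ ≤ exp (-s) / θ ^ N * exp (θ * s) := by
        rw [← mul_sum]
        gcongr
        exact sum_le_exp_of_nonneg (by positivity) _
    _ = exp (s * (θ - 1)) / θ ^ N := by
        rw [div_mul_eq_mul_div, ← exp_add]
        ring_nf

theorem sq_div_le_neg_log_poissonCDF (hs : 0 < s) (hNs : (N : ℝ) ≤ s) :
    (s - N) ^ 2 / (2 * s) ≤ -log (poissonCDF s N) := by
  rcases N.eq_zero_or_pos with rfl | hN
  · rw [poissonCDF, sum_range_one, poissonTerm]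
    simp only [pow_zero, Nat.factorial_zero, Nat.cast_one, mul_one, div_one, log_exp, neg_neg,
      Nat.cast_zero, sub_zero]
    rw [div_le_iff₀ (by positivity)]
    nlinarith
  -- Chernoff bound at `θ = N / s`, then `log θ ≥ (θ - θ⁻¹) / 2`.
  set θ := (N : ℝ) / s
  have hθ0 : 0 < θ := by positivity
  have hθ1 : θ ≤ 1 := (div_le_one hs).2 hNs
  have hcdf := poissonCDF_le_exp_div_pow (N := N) hs hθ0 hθ1
  have hlog : log (poissonCDF s N) ≤ s * (θ - 1) - N * log θ := by
    rw [← log_exp (s * (θ - 1)), ← log_pow, ← log_div (exp_pos _).ne' (by positivity)]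
    exact log_le_log (by linarith [poissonTerm_le_poissonCDF hs N, poissonTerm_pos hs N]) hcdf
  have hNθ : (N : ℝ) = θ * s := (div_mul_cancel₀ _ hs.ne').symm
  calc (s - N) ^ 2 / (2 * s) = -(s * (θ - 1) - N * ((θ - θ⁻¹) / 2)) := by
        rw [hNθ]; field_simp; ring
    _ ≤ -(s * (θ - 1) - N * log θ) := by
        gcongr
        exact half_sub_inv_le_log hθ0 hθ1
    _ ≤ -log (poissonCDF s N) := neg_le_neg hlog

theorem neg_log_poissonTerm_le (hs : 0 < s) (N : ℕ) :
    -log (poissonTerm s N) ≤ (s - N) ^ 2 / s + log N / 2 + 1 := by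
  rcases N.eq_zero_or_pos with rfl | hN
  · simp [poissonTerm, sq, hs.ne']
  have hN' : (0 : ℝ) < N := by exact_mod_cast hN
  have hlogp : -log (poissonTerm s N) = s - N * log s + log N ! := by
    rw [poissonTerm, log_div (by positivity) (by positivity), log_mul (exp_pos _).ne' (by positivity),
      log_exp, log_pow]
    ring
  have hratio : N * (log N - log s) ≤ N * (N / s - 1) := by
    rw [← log_div hN'.ne' hs.ne']
    exact mul_le_mul_of_nonneg_left (log_le_sub_one_of_pos (by positivity)) hN'.le
  have hsq : (s - N) ^ 2 / s = s - N + N * (N / s - 1) := by field_simp; ring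
  linarith [log_factorial_le_stirling N]

theorem neg_log_poissonCDF_le (hs : 0 < s) (hsr : √s ≤ r) (hN : (N : ℝ) = s - r) :
    -log (poissonCDF s N) ≤ 6 * r ^ 2 / s := by
  have hr : 0 < r := (sqrt_pos.2 hs).trans_le hsr
  have hsqrt : √s * √s = s := mul_self_sqrt hs.le
  have hs1 : 1 ≤ s := by nlinarith [sqrt_nonneg s]
  have hr2 : 1 ≤ r ^ 2 / s := by rw [le_div_iff₀ hs]; nlinarith [sqrt_nonneg s]
  have hlow := div_mul_poissonTerm_le_poissonCDF hs hsr hN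
  have hp := poissonTerm_pos hs N
  have hlogT : -log (poissonCDF s N) ≤ log 8 + log r - log s - log (poissonTerm s N) := by
    have := log_le_log (by positivity) hlow
    rw [log_mul (by positivity) hp.ne', log_div hs.ne' (by positivity),
      log_mul (by norm_num) hr.ne'] at this
    linarith
  have hlogN : log N ≤ log s := by
    rcases N.eq_zero_or_pos with rfl | hN0
    · simpa using log_nonneg hs1
    · exact log_le_log (by exact_mod_cast hN0) (by linarith)
  -- `log (r / √s) ≤ r / √s - 1 ≤ (r / √s) ^ 2`
  have hlogr : log r - log s / 2 ≤ r ^ 2 / s := by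
    have h := log_le_sub_one_of_pos (div_pos hr (sqrt_pos.2 hs))
    rw [log_div hr.ne' (sqrt_pos.2 hs).ne', log_sqrt hs.le] at h
    have hsq : r ^ 2 / s = (r / √s) ^ 2 := by rw [div_pow, sq_sqrt hs.le]
    nlinarith [sq_nonneg (r / √s - 1)]
  have hlog8 : log 8 < 3 := by
    rw [show (8 : ℝ) = 2 ^ 3 by norm_num, log_pow]
    push_cast
    linarith [log_two_lt_d9]
  have hterm := neg_log_poissonTerm_le hs N
  rw [show s - (N : ℝ) = r by rw [hN]; ring] at hterm
  have : 6 * r ^ 2 / s = 6 * (r ^ 2 / s) := by ring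
  linarith

end Poisson

/-- Two-sided bounds on the Poisson lower tail and on the lower tail-to-point
ratio: there are constants `c, C > 0` such that uniformly in `s > 0` and
`√s ≤ r ≤ s` with `s - r = N ∈ ℕ`, one has
`c·r²/s ≤ -log P(X_s ≤ s - r) ≤ C·r²/s` and
`c·(s/r) ≤ P(X_s ≤ s - r)/P(X_s = s - r) ≤ C·(s/r)`. -/
theorem poisson_lower_tail_bounds : ∃ c C : ℝ, 0 < c ∧ 0 < C ∧
    ∀ (s r : ℝ), 0 < s → Real.sqrt s ≤ r → r ≤ s → ∀ N : ℕ, (N : ℝ) = s - r →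
      (c * r^2 / s ≤
          -Real.log (∑ x ∈ Finset.range (N + 1), Real.exp (-s) * s ^ x / (Nat.factorial x : ℝ)) ∧
        -Real.log (∑ x ∈ Finset.range (N + 1), Real.exp (-s) * s ^ x / (Nat.factorial x : ℝ)) ≤
          C * r^2 / s) ∧
      (c * (s/r) ≤
          (∑ x ∈ Finset.range (N + 1), Real.exp (-s) * s ^ x / (Nat.factorial x : ℝ)) /
            (Real.exp (-s) * s ^ N / (Nat.factorial N : ℝ)) ∧
        (∑ x ∈ Finset.range (N + 1), Real.exp (-s) * s ^ x / (Nat.factorial x : ℝ)) /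
            (Real.exp (-s) * s ^ N / (Nat.factorial N : ℝ)) ≤
          C * (s/r)) := by
  refine ⟨1 / 8, 6, by norm_num, by norm_num, fun s r hs hsr _ N hN ↦ ?_⟩
  have hr : 0 < r := (sqrt_pos.2 hs).trans_le hsr
  have hp := poissonTerm_pos hs N
  have hNr : s - N = r := by rw [hN]; ring
  have hlog : r ^ 2 / (2 * s) ≤ -log (poissonCDF s N) := by
    simpa [hNr] using sq_div_le_neg_log_poissonCDF hs (by linarith : (N : ℝ) ≤ s)
  have hupper : poissonCDF s N ≤ s / r * poissonTerm s N := by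
    simpa [hNr] using poissonCDF_le_div_mul_poissonTerm hs (by linarith : (N : ℝ) < s)
  have hlower := div_mul_poissonTerm_le_poissonCDF hs hsr hN
  refine ⟨⟨?_, neg_log_poissonCDF_le hs hsr hN⟩, ?_, ?_⟩
  · calc 1 / 8 * r ^ 2 / s ≤ r ^ 2 / (2 * s) := by
          rw [div_le_div_iff₀ hs (by positivity)]; nlinarith [sq_nonneg r]
      _ ≤ _ := hlog
  · show _ ≤ poissonCDF s N / poissonTerm s N
    rw [le_div_iff₀ hp]
    calc 1 / 8 * (s / r) * poissonTerm s N = s / (8 * r) * poissonTerm s N := by ring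
      _ ≤ _ := hlower
  · show poissonCDF s N / poissonTerm s N ≤ _
    rw [div_le_iff₀ hp]
    nlinarith [div_pos hs hr]
end

section
/- For s > 0 let p_s : ℕ → ℝ be the Poisson probability mass function p_s(x) = e^{−s}·s^x/x!, and let H(s) = −Σ_{x=0}^∞ p_s(x)·log p_s(x) be the entropy of the Poisson distribution with mean s. There exist constants C > 0 and s₀ ≥ 1 such that for all s ≥ s₀, |H(s) − (1/2)·log(2πe·s)| ≤ C·s^{−1/4}. -/
/-!
Write `-p log p = p · (x log (x/s) + (s - x) + ½ log ((x+1)/s) + ½ log s + ½ log 2π + ε(x))`,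
with `ε` the Stirling remainder of `log x!`. The Poisson shift identity
`E[X g(X)] = s E[g(X+1)]` turns `E[X log (X/s)]` into `s E[L]` with `L = log ((X+1)/s)`, so that
`H(s) - ½ log (2πes) = (s + ½) E[L] - ½ + E[ε(X)]`, and `|E[ε(X)]| ≤ E[1/(X+1)] ≤ 1/s`.
With `U = (X+1-s)/s` we have `L = log (1 + U)`, and the same identity gives `E[U] = 1/s`,
`E[U²] = (s+1)/s²`, `E[U⁴] = (3s² + 11s + 1)/s⁴`. Hence the cubic Taylor bound for
`log (1 + U)` gives `E[L] = (s-1)/(2s²) + O(s^{-3/2})`, and the error is `O(s^{-1/2})`.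
-/

open Real Filter Topology
open scoped Nat

noncomputable section

lemma exists_hasSum_norm_le_of_norm_le {ι E : Type*} [NormedAddCommGroup E] [CompleteSpace E]
    {f : ι → E} {g : ι → ℝ} {b : ℝ} (hg : HasSum g b) (hfg : ∀ i, ‖f i‖ ≤ g i) :
    ∃ a, HasSum f a ∧ ‖a‖ ≤ b :=
  have hf := (Summable.of_norm_bounded hg.summable hfg).hasSum
  ⟨_, hf, hf.norm_le_of_bounded hg hfg⟩

namespace Real

lemma abs_log_one_add_sub_le_of_neg_half_le {u : ℝ} (hu : -(1 / 2) ≤ u) :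
    |log (1 + u) - (u - u ^ 2 / 2)| ≤ 2 * |u| ^ 3 := by
  rcases le_or_gt u (1 / 2) with hu' | hu'
  · have habs : |u| ≤ 1 / 2 := abs_le.mpr ⟨hu, hu'⟩
    have h := abs_log_sub_add_sum_range_le (x := -u) (by rw [abs_neg]; linarith) 2
    norm_num [Finset.sum_range_succ] at h
    calc |log (1 + u) - (u - u ^ 2 / 2)| = |-u + u ^ 2 / 2 + log (1 + u)| := by ring_nf
      _ ≤ |u| ^ 3 / (1 - |u|) := h
      _ ≤ 2 * |u| ^ 3 := by
          rw [div_le_iff₀ (by linarith)]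
          nlinarith [mul_nonneg (pow_nonneg (abs_nonneg u) 3) (by linarith : 0 ≤ 1 - 2 * |u|)]
  · have hpos : 0 < 1 + u := by linarith
    have hupper : log (1 + u) ≤ u := by linarith [log_le_sub_one_of_pos hpos]
    have hinv : (1 + u)⁻¹ ≤ 1 - u + u ^ 2 := by
      rw [inv_le_iff_one_le_mul₀ hpos]; nlinarith
    have hlower : u - u ^ 2 ≤ log (1 + u) := by
      linarith [one_sub_inv_le_log_of_pos hpos]
    rw [abs_of_pos (by linarith : 0 < u), abs_le]
    constructor <;> nlinarith

-- On `u < -1/2` the crude bound `|log (1 + u)| ≤ 2 log t` is paid for by `16 u⁴ ≥ 1`.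
lemma abs_log_one_add_sub_le {t u : ℝ} (ht : 1 ≤ t) (hu : 1 ≤ t ^ 2 * (1 + u)) :
    |log (1 + u) - (u - u ^ 2 / 2)| ≤ u ^ 2 / t + 32 * t * u ^ 4 := by
  have ht0 : 0 < t := by linarith
  rcases le_or_gt (-(1 / 2)) u with hu' | hu'
  · have amgm : 2 * |u| ^ 3 ≤ u ^ 2 / t + t * u ^ 4 := by
      rw [div_add' _ _ _ ht0.ne', le_div_iff₀ ht0]
      have hcube : |u| ^ 3 = |u| * u ^ 2 := by rw [← sq_abs]; ring
      nlinarith [sq_nonneg (t * u ^ 2 - |u|), sq_abs u]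
    have hquartic : 0 ≤ t * u ^ 4 := by positivity
    linarith [abs_log_one_add_sub_le_of_neg_half_le hu']
  · have hpos : 0 < 1 + u := by nlinarith
    have hlog_neg : log (1 + u) < 0 := log_neg hpos (by linarith)
    have hlog_ge : -(2 * (t - 1)) ≤ log (1 + u) := by
      have h1 : log (t ^ 2) + log (1 + u) ≥ 0 := by
        rw [← log_mul (by positivity) hpos.ne']; exact log_nonneg hu
      rw [log_pow] at h1
      push_cast at h1
      linarith [log_le_sub_one_of_pos ht0]
    have hu2 : 1 / 4 ≤ u ^ 2 := by nlinarith
    have hu4 : 1 ≤ 16 * u ^ 4 := by nlinarith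
    rw [abs_le]
    constructor <;> nlinarith [sq_nonneg u, div_nonneg (sq_nonneg u) ht0.le]

lemma log_two_mul_pi_lt_two : log (2 * π) < 2 := by
  rw [log_lt_iff_lt_exp (by positivity), show (2 : ℝ) = 1 + 1 by norm_num, exp_add]
  nlinarith [pi_lt_d2, exp_one_gt_d9]

end Real

namespace Stirling

lemma log_factorial_le_stirling {n : ℕ} (hn : n ≠ 0) :
    log n ! ≤ n * log n - n + log n / 2 + log (2 * π) / 2 + 1 / (12 * n) := by
  let a (k : ℕ) : ℝ := log (stirlingSeq (k + 1)) - 1 / 12 * (1 / ((k : ℝ) + 1))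
  have ha_mono : Monotone a := by
    refine monotone_nat_of_le_succ fun k => ?_
    have h := log_stirlingSeq_sdiff_le (k + 1)
    have hk : (0 : ℝ) < k + 1 := by positivity
    have htelescope : 1 / (12 * ((k + 1 : ℕ) : ℝ) * ((k + 1 : ℕ) + 1))
        = 1 / 12 * (1 / ((k : ℝ) + 1)) - 1 / 12 * (1 / (((k + 1 : ℕ) : ℝ) + 1)) := by
      push_cast; field_simp; ring
    simp only [a]
    linarith
  have ha_lim : Tendsto a atTop (𝓝 (log π / 2)) := by
    have h := ((tendsto_stirlingSeq_sqrt_pi.comp (tendsto_add_atTop_nat 1)).log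
      (sqrt_pos.mpr pi_pos).ne').sub (tendsto_one_div_add_atTop_nhds_zero_nat.const_mul (1 / 12))
    rwa [mul_zero, sub_zero, log_sqrt pi_pos.le] at h
  obtain ⟨m, rfl⟩ := Nat.exists_eq_add_one_of_ne_zero hn
  have h := ha_mono.ge_of_tendsto ha_lim m
  have hf := log_stirlingSeq_formula (m + 1)
  have hm : (0 : ℝ) < m + 1 := by positivity
  simp only [a] at h
  push_cast at hf ⊢
  rw [log_mul two_ne_zero hm.ne', log_div hm.ne' (exp_pos 1).ne', log_exp] at hf
  rw [one_div_mul_one_div] at h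
  rw [log_mul two_ne_zero pi_pos.ne']
  linarith

end Stirling

-- Stirling's formula with `log (n + 1)` in place of `log n`, so that the remainder stays
-- bounded by `1 / (n + 1)` down to `n = 0`.
def stirlingRemainder (n : ℕ) : ℝ :=
  log n ! - (n * log n - n + log (n + 1) / 2 + log (2 * π) / 2)

lemma abs_stirlingRemainder_le (n : ℕ) : |stirlingRemainder n| ≤ 1 / (n + 1) := by
  rcases eq_or_ne n 0 with rfl | hn
  · have h0 : 0 < log (2 * π) := log_pos (by linarith [pi_gt_three])
    simp only [stirlingRemainder, Nat.factorial_zero, Nat.cast_one, log_one, Nat.cast_zero,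
      zero_mul, zero_add, sub_zero]
    rw [abs_le]
    constructor <;> linarith [log_two_mul_pi_lt_two]
  · have hn0 : (0 : ℝ) < n := by positivity
    have hlower := Stirling.le_log_factorial_stirling hn
    have hupper := Stirling.log_factorial_le_stirling hn
    have hlog_succ : log (n + 1) - log n ≤ 1 / n := by
      rw [← log_div (by positivity) hn0.ne']
      calc log ((n + 1) / n) ≤ (n + 1) / n - 1 := log_le_sub_one_of_pos (by positivity)
        _ = 1 / n := by field_simp; ring
    have hlog_mono : log n ≤ log (n + 1) := log_le_log hn0 (by linarith)
    have h12 : 1 / (12 * (n : ℝ)) ≤ 1 / (2 * n) := by gcongr; norm_num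
    have h2 : 1 / (2 * (n : ℝ)) ≤ 1 / (n + 1) := by
      gcongr; linarith [show (1 : ℝ) ≤ n by exact_mod_cast Nat.one_le_iff_ne_zero.mpr hn]
    have hhalf : 1 / (n : ℝ) = 2 * (1 / (2 * n)) := by field_simp
    rw [stirlingRemainder, abs_le]
    constructor <;> linarith

def poissonWeight (s : ℝ) (x : ℕ) : ℝ := exp (-s) * s ^ x / x !

section PoissonWeight

variable {s : ℝ}

lemma poissonWeight_nonneg (hs : 0 ≤ s) (x : ℕ) : 0 ≤ poissonWeight s x := by
  unfold poissonWeight; positivity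

lemma hasSum_poissonWeight (s : ℝ) : HasSum (poissonWeight s) 1 := by
  have h := (NormedSpace.expSeries_div_hasSum_exp s).mul_left (exp (-s))
  rw [← exp_eq_exp_ℝ, ← exp_add, neg_add_cancel, exp_zero] at h
  exact h.congr_fun fun x => mul_div_assoc _ _ _

lemma poissonWeight_succ_mul (s : ℝ) (x : ℕ) :
    poissonWeight s (x + 1) * (x + 1) = s * poissonWeight s x := by
  simp only [poissonWeight, Nat.factorial_succ, Nat.cast_mul, Nat.cast_succ]
  field_simp
  ring

lemma HasSum.poissonWeight_mul_natCast_mul {g : ℕ → ℝ} {a : ℝ}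
    (h : HasSum (fun x => poissonWeight s x * g (x + 1)) a) :
    HasSum (fun x : ℕ => poissonWeight s x * (x * g x)) (s * a) := by
  have h' : HasSum (fun x : ℕ => poissonWeight s (x + 1) * (((x + 1 : ℕ) : ℝ) * g (x + 1)))
      (s * a) := by
    refine (h.mul_left s).congr_fun fun x => ?_
    push_cast
    rw [← mul_assoc, poissonWeight_succ_mul, mul_assoc]
  simpa using HasSum.zero_add (f := fun x : ℕ => poissonWeight s x * (x * g x)) h'

lemma HasSum.poissonWeight_mul_succ_sub_mul {g : ℕ → ℝ} {a b : ℝ}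
    (ha : HasSum (fun x => poissonWeight s x * g (x + 1)) a)
    (hb : HasSum (fun x => poissonWeight s x * g x) b) :
    HasSum (fun x : ℕ => poissonWeight s x * ((x + 1 - s) * g x)) (s * (a - b) + b) := by
  have h := ha.poissonWeight_mul_natCast_mul.add (hb.mul_left (1 - s))
  rw [show s * a + (1 - s) * b = s * (a - b) + b by ring] at h
  exact h.congr_fun fun x => by ring

lemma hasSum_poissonWeight_mul_succ_sub (s : ℝ) :
    HasSum (fun x : ℕ => poissonWeight s x * (x + 1 - s)) 1 := by
  have h1 : HasSum (fun x => poissonWeight s x * 1) 1 :=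
    (hasSum_poissonWeight s).congr_fun fun x => mul_one _
  simpa using HasSum.poissonWeight_mul_succ_sub_mul (g := fun _ => 1) h1 h1

lemma hasSum_poissonWeight_mul_succ_sub_sq (s : ℝ) :
    HasSum (fun x : ℕ => poissonWeight s x * (x + 1 - s) ^ 2) (s + 1) := by
  have h1 := hasSum_poissonWeight_mul_succ_sub s
  have h := HasSum.poissonWeight_mul_succ_sub_mul (g := fun x : ℕ => (x : ℝ) + 1 - s)
    ((h1.add (hasSum_poissonWeight s)).congr_fun fun x => by push_cast; ring) h1
  rw [show s * (1 + 1 - 1) + 1 = s + 1 by ring] at h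
  exact h.congr_fun fun x => by ring

lemma hasSum_poissonWeight_mul_succ_sub_pow_three (s : ℝ) :
    HasSum (fun x : ℕ => poissonWeight s x * (x + 1 - s) ^ 3) (4 * s + 1) := by
  have h1 := hasSum_poissonWeight_mul_succ_sub s
  have h2 := hasSum_poissonWeight_mul_succ_sub_sq s
  have h := HasSum.poissonWeight_mul_succ_sub_mul (g := fun x : ℕ => ((x : ℝ) + 1 - s) ^ 2)
    ((h2.add ((h1.mul_left 2).add (hasSum_poissonWeight s))).congr_fun fun x => by
      push_cast; ring) h2
  rw [show s * (s + 1 + (2 * 1 + 1) - (s + 1)) + (s + 1) = 4 * s + 1 by ring] at h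
  exact h.congr_fun fun x => by ring

lemma hasSum_poissonWeight_mul_succ_sub_pow_four (s : ℝ) :
    HasSum (fun x : ℕ => poissonWeight s x * (x + 1 - s) ^ 4) (3 * s ^ 2 + 11 * s + 1) := by
  have h1 := hasSum_poissonWeight_mul_succ_sub s
  have h2 := hasSum_poissonWeight_mul_succ_sub_sq s
  have h3 := hasSum_poissonWeight_mul_succ_sub_pow_three s
  have h := HasSum.poissonWeight_mul_succ_sub_mul (g := fun x : ℕ => ((x : ℝ) + 1 - s) ^ 3)
    ((h3.add ((h2.mul_left 3).add ((h1.mul_left 3).add (hasSum_poissonWeight s)))).congr_fun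
      fun x => by push_cast; ring) h3
  rw [show s * (4 * s + 1 + (3 * (s + 1) + (3 * 1 + 1)) - (4 * s + 1)) + (4 * s + 1)
    = 3 * s ^ 2 + 11 * s + 1 by ring] at h
  exact h.congr_fun fun x => by ring

lemma hasSum_poissonWeight_div_succ (hs : s ≠ 0) :
    HasSum (fun x : ℕ => poissonWeight s x / (x + 1)) ((1 - exp (-s)) / s) := by
  have h := (hasSum_nat_add_iff' 1).mpr (hasSum_poissonWeight s)
  have hp0 : poissonWeight s 0 = exp (-s) := by simp [poissonWeight]
  rw [Finset.sum_range_one, hp0] at h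
  refine (h.div_const s).congr_fun fun x => ?_
  rw [div_eq_div_iff (by positivity) hs, poissonWeight_succ_mul, mul_comm]

lemma exists_hasSum_poissonWeight_mul_of_abs_le (hs : 0 ≤ s) {f g : ℕ → ℝ} {b : ℝ}
    (hg : HasSum (fun x => poissonWeight s x * g x) b) (hfg : ∀ x, |f x| ≤ g x) :
    ∃ a, HasSum (fun x => poissonWeight s x * f x) a ∧ |a| ≤ b :=
  exists_hasSum_norm_le_of_norm_le hg fun x => by
    rw [Real.norm_eq_abs, abs_mul, abs_of_nonneg (poissonWeight_nonneg hs x)]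
    exact mul_le_mul_of_nonneg_left (hfg x) (poissonWeight_nonneg hs x)

lemma exists_hasSum_poissonWeight_mul_stirlingRemainder (hs : 0 < s) :
    ∃ e, HasSum (fun x => poissonWeight s x * stirlingRemainder x) e ∧ |e| ≤ 1 / s := by
  obtain ⟨e, he, he_le⟩ := exists_hasSum_poissonWeight_mul_of_abs_le hs.le
    ((hasSum_poissonWeight_div_succ hs.ne').congr_fun fun x => mul_one_div _ _)
    abs_stirlingRemainder_le
  refine ⟨e, he, he_le.trans ?_⟩
  gcongr
  linarith [exp_pos (-s)]

lemma exists_hasSum_poissonWeight_mul_log_succ_div (hs : 1 ≤ s) :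
    ∃ L, HasSum (fun x : ℕ => poissonWeight s x * log ((x + 1) / s)) L ∧
      |L - (s - 1) / (2 * s ^ 2)| ≤ 482 / (s * √s) := by
  have hs0 : 0 < s := by linarith
  set t := √s
  have ht : 1 ≤ t := one_le_sqrt.mpr hs
  have hts : t ^ 2 = s := sq_sqrt hs0.le
  set u : ℕ → ℝ := fun x => ((x : ℝ) + 1 - s) / s with hu_def
  have hu1 : HasSum (fun x => poissonWeight s x * u x) (1 / s) :=
    ((hasSum_poissonWeight_mul_succ_sub s).div_const s).congr_fun fun x =>
      (mul_div_assoc _ _ _).symm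
  have hu2 : HasSum (fun x => poissonWeight s x * u x ^ 2) ((s + 1) / s ^ 2) :=
    ((hasSum_poissonWeight_mul_succ_sub_sq s).div_const (s ^ 2)).congr_fun fun x => by
      rw [div_pow, mul_div_assoc]
  have hu4 : HasSum (fun x => poissonWeight s x * u x ^ 4) ((3 * s ^ 2 + 11 * s + 1) / s ^ 4) :=
    ((hasSum_poissonWeight_mul_succ_sub_pow_four s).div_const (s ^ 4)).congr_fun fun x => by
      rw [div_pow, mul_div_assoc]
  have h_one_add (x : ℕ) : 1 + u x = (x + 1) / s := by
    simp only [hu_def]; field_simp; ring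
  obtain ⟨R, hR, hR_le⟩ := exists_hasSum_poissonWeight_mul_of_abs_le hs0.le
    (f := fun x => log (1 + u x) - (u x - u x ^ 2 / 2))
    (g := fun x => u x ^ 2 / t + 32 * t * u x ^ 4)
    (((hu2.div_const t).add (hu4.mul_left (32 * t))).congr_fun fun x => by ring)
    (fun x => abs_log_one_add_sub_le ht (by
      rw [hts, h_one_add, mul_div_cancel₀ _ hs0.ne']
      linarith [(Nat.cast_nonneg x : (0 : ℝ) ≤ x)]))
  refine ⟨1 / s - (s + 1) / s ^ 2 / 2 + R,
    ((hu1.sub (hu2.div_const 2)).add hR).congr_fun fun x => by rw [← h_one_add]; ring, ?_⟩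
  have hm2 : (s + 1) / s ^ 2 ≤ 2 / s := by
    rw [div_le_div_iff₀ (by positivity) hs0]; nlinarith
  have hm4 : (3 * s ^ 2 + 11 * s + 1) / s ^ 4 ≤ 15 / s ^ 2 := by
    rw [div_le_div_iff₀ (by positivity) (by positivity)]
    nlinarith [mul_nonneg (mul_nonneg (sq_nonneg s) (by linarith : 0 ≤ 12 * s + 1))
      (by linarith : 0 ≤ s - 1)]
  calc |1 / s - (s + 1) / s ^ 2 / 2 + R - (s - 1) / (2 * s ^ 2)| = |R| := by
        congr 1; field_simp; ring
    _ ≤ (s + 1) / s ^ 2 / t + 32 * t * ((3 * s ^ 2 + 11 * s + 1) / s ^ 4) := hR_le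
    _ ≤ 2 / s / t + 32 * t * (15 / s ^ 2) := by gcongr
    _ = 482 / (s * t) := by
        rw [← hts]; field_simp; ring

lemma neg_log_poissonWeight (hs : 0 < s) (x : ℕ) :
    -log (poissonWeight s x) = x * log (x / s) + (s - x) + log ((x + 1) / s) / 2
      + (log s / 2 + log (2 * π) / 2) + stirlingRemainder x := by
  have hxlog : (x : ℝ) * log (x / s) = x * log x - x * log s := by
    rcases eq_or_ne x 0 with rfl | hx
    · simp
    · rw [log_div (by positivity) hs.ne']; ring
  rw [hxlog, poissonWeight, log_div (by positivity) (by positivity),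
    log_mul (exp_pos _).ne' (by positivity), log_exp, log_pow, log_div (by positivity) hs.ne',
    stirlingRemainder]
  ring

lemma hasSum_neg_poissonWeight_mul_log (hs : 0 < s) {L e : ℝ}
    (hL : HasSum (fun x : ℕ => poissonWeight s x * log ((x + 1) / s)) L)
    (he : HasSum (fun x => poissonWeight s x * stirlingRemainder x) e) :
    HasSum (fun x => -(poissonWeight s x * log (poissonWeight s x)))
      ((s + 1 / 2) * L + log s / 2 + log (2 * π) / 2 + e) := by
  have hxlog := HasSum.poissonWeight_mul_natCast_mul (g := fun x : ℕ => log (x / s))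
    (hL.congr_fun fun x => by push_cast; rfl)
  have hcentered : HasSum (fun x => poissonWeight s x * (s - x)) (1 - 1) :=
    ((hasSum_poissonWeight s).sub (hasSum_poissonWeight_mul_succ_sub s)).congr_fun
      fun x => by ring
  have h := (((hxlog.add hcentered).add (hL.div_const 2)).add
    ((hasSum_poissonWeight s).mul_right (log s / 2 + log (2 * π) / 2))).add he
  rw [show s * L + (1 - 1) + L / 2 + 1 * (log s / 2 + log (2 * π) / 2) + e
    = (s + 1 / 2) * L + log s / 2 + log (2 * π) / 2 + e by ring] at h
  exact h.congr_fun fun x => by rw [neg_mul_eq_mul_neg, neg_log_poissonWeight hs]; ring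

end PoissonWeight

def poissonEntropy (s : ℝ) : ℝ := -∑' x, poissonWeight s x * log (poissonWeight s x)

theorem abs_poissonEntropy_sub_le {s : ℝ} (hs : 1 ≤ s) :
    |poissonEntropy s - 1 / 2 * log (2 * π * exp 1 * s)| ≤ 725 / √s := by
  have hs0 : 0 < s := by linarith
  obtain ⟨L, hL, hL_le⟩ := exists_hasSum_poissonWeight_mul_log_succ_div hs
  obtain ⟨e, he, he_le⟩ := exists_hasSum_poissonWeight_mul_stirlingRemainder hs0
  have hH : poissonEntropy s = (s + 1 / 2) * L + log s / 2 + log (2 * π) / 2 + e := by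
    rw [poissonEntropy, ← tsum_neg, (hasSum_neg_poissonWeight_mul_log hs0 hL he).tsum_eq]
  have hlog : log (2 * π * exp 1 * s) = log (2 * π) + 1 + log s := by
    rw [log_mul (by positivity) hs0.ne', log_mul (by positivity) (exp_pos 1).ne', log_exp]
  set t := √s
  have ht : 1 ≤ t := one_le_sqrt.mpr hs
  have hts : t ^ 2 = s := sq_sqrt hs0.le
  calc |poissonEntropy s - 1 / 2 * log (2 * π * exp 1 * s)|
      = |(s + 1 / 2) * (L - (s - 1) / (2 * s ^ 2)) - (s + 1) / (4 * s ^ 2) + e| := by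
        rw [hH, hlog]; congr 1; field_simp; ring
    _ ≤ (s + 1 / 2) * (482 / (s * t)) + (s + 1) / (4 * s ^ 2) + 1 / s := by
        refine (abs_add_le _ _).trans (add_le_add ((abs_sub _ _).trans (add_le_add ?_ ?_)) he_le)
        · rw [abs_mul, abs_of_pos (by positivity)]; gcongr
        · rw [abs_of_pos (by positivity)]
    _ ≤ 723 / t + 1 / 2 / t + 1 / t := by
        have hts' : t ≤ s := by nlinarith
        have h1 : (s + 1 / 2) * (482 / (s * t)) ≤ 723 / t := by
          rw [mul_div_assoc', div_le_div_iff₀ (by positivity) (by positivity)]; nlinarith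
        have h2 : (s + 1) / (4 * s ^ 2) ≤ 1 / 2 / t := by
          rw [div_div, div_le_div_iff₀ (by positivity) (by positivity)]; nlinarith
        have h3 : 1 / s ≤ 1 / t := one_div_le_one_div_of_le (by positivity) hts'
        exact add_le_add (add_le_add h1 h2) h3
    _ ≤ 725 / t := by
        rw [← add_div, ← add_div]; gcongr; norm_num

end

/-- Large-time asymptotic of the Poisson entropy: with
`H(s) = -∑_x p_s(x) log p_s(x)` the Shannon entropy of a Poisson random
variable with mean `s`, there are constants `C > 0` and `s₀ ≥ 1` such that
`|H(s) - (1/2)·log(2πe·s)| ≤ C·s^{-1/4}` for all `s ≥ s₀`. -/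
theorem poisson_entropy_large_time : ∃ C s₀ : ℝ, 0 < C ∧ 1 ≤ s₀ ∧
    ∀ s : ℝ, s₀ ≤ s →
      |(-∑' x : ℕ, (Real.exp (-s) * s ^ x / (Nat.factorial x : ℝ)) *
            Real.log (Real.exp (-s) * s ^ x / (Nat.factorial x : ℝ))) -
          (1/2) * Real.log (2 * π * Real.exp 1 * s)| ≤
        C * s ^ (-(1/4 : ℝ)) := by
  refine ⟨725, 1, by norm_num, le_rfl, fun s hs => (abs_poissonEntropy_sub_le hs).trans ?_⟩
  rw [sqrt_eq_rpow, div_eq_mul_inv, ← rpow_neg (by linarith)]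
  exact mul_le_mul_of_nonneg_left (rpow_le_rpow_of_exponent_le hs (by norm_num)) (by norm_num)
end
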